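/- Let m ≥ 1 and κ = (κ_1 ≥ … ≥ κ_m ≥ 0) a partition. For every complex Hermitian positive semidefinite m×m matrix x, the value Φ_κ(x) = ∫_{U(m)} Δ_κ(u x u*) du is a nonnegative real number, and if rank(x) = k and the length l(κ) = k, then Φ_κ(x) > 0. -/

import Mathlib

/-!
Conjugating by unitaries preserves positive semidefiniteness, and the leading principal minors of a
positive semidefinite matrix are nonnegative, so the integrand `u ↦ Δ_κ(u x u*)` is nonnegative.
It is also continuous, and a left-invariant probability measure on the compact group `U(m)` charges
every nonempty open set, so the integral is positive as soon as the integrand is positive at one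
point. Such a point is a unitary `u` with `u x u* = diag(λ₁ ≥ … ≥ λ_m)`: if `rank x = k` then
`λ₁, …, λ_k > 0`, and `l(κ) = k` means that only the minors `Δ_i` with `i ≤ k` occur in `Δ_κ`.
-/

open MeasureTheory Matrix
open scoped ComplexOrder

noncomputable instance matrixMeasurableSpace {k l α : Type*} [MeasurableSpace α] :
    MeasurableSpace (Matrix k l α) :=
  inferInstanceAs (MeasurableSpace (k → l → α))

/-- The `i`-th leading principal minor of a complex `m×m` matrix (`i ≤ m`), as a real number
(for Hermitian matrices the leading principal minors are real). -/
noncomputable def leadingMinorC {m : ℕ} (x : Matrix (Fin m) (Fin m) ℂ) (i : ℕ) (h : i ≤ m) :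
    ℝ :=
  (x.submatrix (Fin.castLE h) (Fin.castLE h)).det.re

/-- The generalized power `Δ_κ(x) = ∏_{i=1}^m Δ_i(x)^(κ_i − κ_{i+1})` (`κ_{m+1} := 0`) on
complex matrices, with the partition `κ` indexed by `Fin m` (so `κ j` is the part `κ_{j+1}`). -/
noncomputable def DeltaKappaC {m : ℕ} (κ : Fin m → ℕ) (x : Matrix (Fin m) (Fin m) ℂ) : ℝ :=
  ∏ i : Fin m, leadingMinorC x ((i : ℕ) + 1) i.isLt ^
    (κ i - if h : (i : ℕ) + 1 < m then κ ⟨(i : ℕ) + 1, h⟩ else 0)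

/-- `μ` is the normalized Haar measure on the unitary group `U(m)`: a left-translation
invariant Borel probability measure (such a measure is unique on the compact group `U(m)`). -/
def IsHaarU (m : ℕ) (μ : Measure (Matrix.unitaryGroup (Fin m) ℂ)) : Prop :=
  IsProbabilityMeasure μ ∧
    ∀ v : Matrix.unitaryGroup (Fin m) ℂ, μ.map (fun u => v * u) = μ

/-- The spherical polynomial `Φ_κ(x) = ∫_{U(m)} Δ_κ(u x u*) du` on the cone of Hermitian
positive semidefinite matrices, relative to the normalized Haar measure `μ` on `U(m)`. -/
noncomputable def PhiKC {m : ℕ} (μ : Measure (Matrix.unitaryGroup (Fin m) ℂ))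
    (κ : Fin m → ℕ) (x : Matrix (Fin m) (Fin m) ℂ) : ℝ :=
  ∫ u, DeltaKappaC κ
    ((u : Matrix (Fin m) (Fin m) ℂ) * x * star (u : Matrix (Fin m) (Fin m) ℂ)) ∂μ

instance matrixBorelSpace {k l α : Type*} [Countable k] [Countable l] [TopologicalSpace α]
    [MeasurableSpace α] [BorelSpace α] [SecondCountableTopology α] :
    BorelSpace (Matrix k l α) :=
  inferInstanceAs (BorelSpace (k → l → α))

instance unitaryGroupBorelSpace {n : Type*} [Fintype n] [DecidableEq n] :
    BorelSpace (unitaryGroup n ℂ) :=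
  Subtype.borelSpace _

theorem Matrix.isCompact_unitaryGroup (n 𝕜 : Type*) [Fintype n] [DecidableEq n] [RCLike 𝕜] :
    IsCompact (unitaryGroup n 𝕜 : Set (Matrix n n 𝕜)) := by
  have hclosed := isClosed_unitary (R := Matrix n n 𝕜)
  open scoped Matrix.Norms.Elementwise in
  exact (isCompact_closedBall (0 : Matrix n n 𝕜) 1).of_isClosed_subset hclosed
    fun _ hU => mem_closedBall_zero_iff.2 (entrywise_sup_norm_bound_of_unitary hU)

instance unitaryGroupCompactSpace {n 𝕜 : Type*} [Fintype n] [DecidableEq n] [RCLike 𝕜] :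
    CompactSpace (unitaryGroup n 𝕜) :=
  isCompact_iff_compactSpace.mp (isCompact_unitaryGroup n 𝕜)

theorem IsHaarU.isOpenPosMeasure {m : ℕ} {μ : Measure (unitaryGroup (Fin m) ℂ)}
    (hμ : IsHaarU m μ) : Measure.IsOpenPosMeasure μ :=
  have : IsProbabilityMeasure μ := hμ.1
  have : Measure.IsMulLeftInvariant μ := ⟨hμ.2⟩
  isOpenPosMeasure_of_mulLeftInvariant_of_compact _ isCompact_univ (by simp)

theorem continuous_deltaKappaC {m : ℕ} (κ : Fin m → ℕ) : Continuous (DeltaKappaC κ) :=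
  continuous_finsetProd _ fun _ _ =>
    (Complex.continuous_re.comp (continuous_id.matrix_submatrix _ _).matrix_det).pow _

theorem deltaKappaC_nonneg {m : ℕ} (κ : Fin m → ℕ) {y : Matrix (Fin m) (Fin m) ℂ}
    (hy : y.PosSemidef) : 0 ≤ DeltaKappaC κ y :=
  Finset.prod_nonneg fun _ _ => pow_nonneg (Complex.nonneg_iff.1 (hy.submatrix _).det_nonneg).1 _

theorem deltaKappaC_pos {m : ℕ} (κ : Fin m → ℕ) {y : Matrix (Fin m) (Fin m) ℂ}
    (hy : ∀ i : Fin m, κ i ≠ 0 → 0 < leadingMinorC y (i + 1) i.isLt) :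
    0 < DeltaKappaC κ y := by
  refine Finset.prod_pos fun i _ => ?_
  by_cases hκ : κ i = 0
  · simp [hκ]
  · exact pow_pos (hy i hκ) _

theorem leadingMinorC_diagonal {m : ℕ} (d : Fin m → ℝ) (i : ℕ) (h : i ≤ m) :
    leadingMinorC (diagonal fun j => (d j : ℂ)) i h = ∏ j : Fin i, d (Fin.castLE h j) := by
  rw [leadingMinorC, submatrix_diagonal _ _ (Fin.castLE_injective h), det_diagonal]
  simp only [Function.comp_apply]
  rw [← Complex.ofReal_prod, Complex.ofReal_re]

theorem Matrix.permMatrix_mem_unitaryGroup {n 𝕜 : Type*} [Fintype n] [DecidableEq n] [RCLike 𝕜]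
    (σ : Equiv.Perm n) : σ.permMatrix 𝕜 ∈ unitaryGroup n 𝕜 := by
  rw [mem_unitaryGroup_iff', star_eq_conjTranspose, conjTranspose_permMatrix, ← permMatrix_mul,
    mul_inv_cancel, permMatrix_one]

theorem Matrix.IsHermitian.exists_unitary_conj_eq_diagonal_comp {n 𝕜 : Type*} [Fintype n]
    [DecidableEq n] [RCLike 𝕜] {A : Matrix n n 𝕜} (hA : A.IsHermitian) (σ : Equiv.Perm n) :
    ∃ u : unitaryGroup n 𝕜, (u : Matrix n n 𝕜) * A * star (u : Matrix n n 𝕜) =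
      diagonal fun i => (hA.eigenvalues (σ i) : 𝕜) := by
  set V : Matrix n n 𝕜 := (hA.eigenvectorUnitary : Matrix n n 𝕜)
  have hV : star V * A * V = diagonal (RCLike.ofReal ∘ hA.eigenvalues) := by
    simpa using hA.conjStarAlgAut_star_eigenvectorUnitary
  refine ⟨⟨σ.permMatrix 𝕜, permMatrix_mem_unitaryGroup σ⟩ * star hA.eigenvectorUnitary, ?_⟩
  change σ.permMatrix 𝕜 * star V * A * star (σ.permMatrix 𝕜 * star V) = _
  have hP : star (σ.permMatrix 𝕜) = (σ⁻¹).permMatrix 𝕜 := conjTranspose_permMatrix σ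
  rw [star_mul, star_star, hP]
  calc _ = σ.permMatrix 𝕜 * (star V * A * V) * (σ⁻¹).permMatrix 𝕜 := by
        simp only [Matrix.mul_assoc]
    _ = _ := by
        rw [hV, PEquiv.toMatrix_toPEquiv_mul, PEquiv.mul_toMatrix_toPEquiv, submatrix_submatrix]
        exact submatrix_diagonal _ _ σ.injective

theorem Matrix.IsHermitian.exists_perm_antitone_eigenvalues {m : ℕ} {𝕜 : Type*} [RCLike 𝕜]
    {A : Matrix (Fin m) (Fin m) 𝕜} (hA : A.IsHermitian) :
    ∃ σ : Equiv.Perm (Fin m), Antitone (hA.eigenvalues ∘ σ) :=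
  -- `eigenvalues₀` is sorted, and `eigenvalues` is it reindexed along a chosen equivalence.
  ⟨(finCongr (Fintype.card_fin m).symm).trans (Fintype.equivOfCardEq (Fintype.card_fin _)),
    fun i j hij => hA.eigenvalues₀_antitone (by simpa using hij)⟩

theorem Antitone.pos_of_lt_card_ne_zero {α : Type*} [PartialOrder α] [Zero α] [DecidableEq α]
    {m : ℕ} {d : Fin m → α} (hd : Antitone d) (hd0 : 0 ≤ d) {j : Fin m}
    (hj : (j : ℕ) < Fintype.card {i // d i ≠ 0}) : 0 < d j := by
  refine (hd0 j).lt_of_ne' fun hdj => hj.not_ge ?_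
  rw [Fintype.card_subtype, ← Fin.card_Iio j]
  refine Finset.card_le_card fun i hi => ?_
  simp only [Finset.mem_filter, Finset.mem_univ, true_and] at hi
  exact Finset.mem_Iio.2 (lt_of_not_ge fun hji => hi ((hd hji).trans hdj.le |>.antisymm (hd0 i)))

theorem deltaKappaC_diagonal_pos {m : ℕ} (κ : Fin m → ℕ) {d : Fin m → ℝ} (hd : Antitone d)
    (hd0 : 0 ≤ d) (hκ : ∀ i : Fin m, κ i ≠ 0 → (i : ℕ) < Fintype.card {i // d i ≠ 0}) :
    0 < DeltaKappaC κ (diagonal fun j => (d j : ℂ)) := by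
  refine deltaKappaC_pos κ fun i hi => ?_
  rw [leadingMinorC_diagonal]
  exact Finset.prod_pos fun j _ =>
    hd.pos_of_lt_card_ne_zero hd0 ((Nat.lt_succ_iff.1 j.isLt).trans_lt (hκ i hi))

theorem sphericalPoly_hermitian_nonneg_and_pos_general
    (m : ℕ) (κ : Fin m → ℕ)
    (μ : Measure (Matrix.unitaryGroup (Fin m) ℂ)) (hμ : IsHaarU m μ)
    (x : Matrix (Fin m) (Fin m) ℂ) (hx : x.PosSemidef) :
    0 ≤ PhiKC μ κ x ∧
      ∀ k : ℕ, x.rank = k → (∀ i : Fin m, (i : ℕ) < k ↔ κ i ≠ 0) → 0 < PhiKC μ κ x := by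
  have hnonneg : 0 ≤ fun u : unitaryGroup (Fin m) ℂ =>
      DeltaKappaC κ ((u : Matrix (Fin m) (Fin m) ℂ) * x * star (u : Matrix (Fin m) (Fin m) ℂ)) :=
    fun u => deltaKappaC_nonneg κ (hx.mul_mul_conjTranspose_same _)
  refine ⟨integral_nonneg hnonneg, fun k hrank hlen => ?_⟩
  have := hμ.1
  have := hμ.isOpenPosMeasure
  obtain ⟨σ, hσ⟩ := hx.isHermitian.exists_perm_antitone_eigenvalues
  obtain ⟨u₀, hu₀⟩ := hx.isHermitian.exists_unitary_conj_eq_diagonal_comp σ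
  have hcard : Fintype.card {i // hx.isHermitian.eigenvalues (σ i) ≠ 0} = k := by
    rw [← hrank, hx.isHermitian.rank_eq_card_non_zero_eigs]
    exact Fintype.card_congr (σ.subtypeEquiv fun _ => Iff.rfl)
  have hcont : Continuous fun u : unitaryGroup (Fin m) ℂ =>
      DeltaKappaC κ ((u : Matrix (Fin m) (Fin m) ℂ) * x * star (u : Matrix (Fin m) (Fin m) ℂ)) :=
    (continuous_deltaKappaC κ).comp <|
      (continuous_subtype_val.matrix_mul continuous_const).matrix_mul
        continuous_subtype_val.matrix_conjTranspose
  refine hcont.integral_pos_of_hasCompactSupport_nonneg_nonzero (.of_compactSpace _) hnonneg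
    (x := u₀) ?_
  rw [hu₀]
  exact (deltaKappaC_diagonal_pos κ hσ (fun _ => hx.eigenvalues_nonneg _)
    fun i hi => hcard ▸ (hlen i).2 hi).ne'

/-- Spherical polynomials on the cone of complex Hermitian positive semidefinite matrices:
`Φ_κ(x) ≥ 0` for Hermitian positive semidefinite `x`, and `Φ_κ(x) > 0` whenever `rank x = k`
and the partition `κ` has length `l(κ) = k`. -/
theorem sphericalPoly_hermitian_nonneg_and_pos
    (m : ℕ) (hm : 1 ≤ m) (κ : Fin m → ℕ) (hκ : Antitone κ)
    (μ : Measure (Matrix.unitaryGroup (Fin m) ℂ)) (hμ : IsHaarU m μ)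
    (x : Matrix (Fin m) (Fin m) ℂ) (hx : x.PosSemidef) :
    0 ≤ PhiKC μ κ x ∧
      ∀ k : ℕ, x.rank = k → (∀ i : Fin m, (i : ℕ) < k ↔ κ i ≠ 0) → 0 < PhiKC μ κ x :=
  sphericalPoly_hermitian_nonneg_and_pos_general m κ μ hμ x hx
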